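/- arXiv:1604.01727 — 2 statements merged into one kernel-verified Lean document; each statement's English description precedes it below -/
import Mathlib

section
/- Let v : [0,∞) → X be continuously differentiable with v(0) = v₀ and v′(τ) = −g(v(τ))·(v(τ) − p) for all τ ≥ 0, and set θ(τ) = exp(−∫₀^τ g(v(σ)) dσ). Then θ is differentiable on [0,∞), θ(0) = 1, θ(τ) ∈ (0,1] for all τ ≥ 0, and θ satisfies the one-dimensional characteristic parametric determining form dθ/dτ = −θ(τ)·g(θ(τ)·v₀ + (1 − θ(τ))·p). -/
open Set Filter Topology MeasureTheory intervalIntegral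

/-!
Along a solution, `τ ↦ exp (∫₀^τ g(v)) • (v τ - p)` has derivative zero, so it is constant, equal
to `v₀ - p`. Hence `v τ = θ τ • v₀ + (1 - θ τ) • p`, and the equation `θ' = -g(v) θ`, which holds
by the chain rule and the fundamental theorem of calculus, becomes the scalar determining form.
-/

section

variable {E : Type*} [NormedAddCommGroup E] [NormedSpace ℝ E]

theorem hasDerivWithinAt_integral_Ici [CompleteSpace E] {f : ℝ → E} {a t : ℝ}
    (hf : ContinuousOn f (Ici a)) (ht : a ≤ t) :
    HasDerivWithinAt (fun u => ∫ x in a..u, f x) (f t) (Ici a) t := by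
  -- `Icc a (t + 1)` carries an `FTCFilter` instance and is a neighbourhood of `t` within `Ici a`.
  have : Fact (t ∈ Icc a (t + 1)) := ⟨⟨ht, by linarith⟩⟩
  have hf' : ContinuousOn f (Icc a (t + 1)) := hf.mono Icc_subset_Ici_self
  refine (integral_hasDerivWithinAt_right (s := Icc a (t + 1))
    ((hf'.mono (Icc_subset_Icc_right (by linarith))).intervalIntegrable_of_Icc ht)
    (hf'.stronglyMeasurableAtFilter_nhdsWithin measurableSet_Icc t)
    (hf' t this.out)).mono_of_mem_nhdsWithin ?_
  rw [← Ici_inter_Iic]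
  exact inter_mem_nhdsWithin _ (Iic_mem_nhds (by linarith))

theorem eq_of_hasDerivWithinAt_Ici_zero {z : ℝ → E} {a : ℝ}
    (hz : ∀ t ∈ Ici a, HasDerivWithinAt z 0 (Ici a) t) : ∀ t ∈ Ici a, z t = z a := fun t ht =>
  constant_of_has_deriv_right_zero
    (fun x hx => ((hz x hx.1).continuousWithinAt).mono Icc_subset_Ici_self)
    (fun x hx => (hz x hx.1).mono (Ici_subset_Ici.2 hx.1)) t ⟨ht, le_rfl⟩

theorem sub_eq_exp_smul_of_hasDerivWithinAt {p : E} {v : ℝ → E} {c C : ℝ → ℝ} {t₀ : ℝ}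
    (hC : ∀ t ∈ Ici t₀, HasDerivWithinAt C (c t) (Ici t₀) t)
    (hv : ∀ t ∈ Ici t₀, HasDerivWithinAt v (-c t • (v t - p)) (Ici t₀) t) :
    ∀ t ∈ Ici t₀, v t - p = Real.exp (C t₀ - C t) • (v t₀ - p) := by
  have hz : ∀ t ∈ Ici t₀,
      HasDerivWithinAt (fun s => Real.exp (C s) • (v s - p)) 0 (Ici t₀) t := by
    intro t ht
    convert (hC t ht).exp.smul ((hv t ht).sub_const p) using 1
    · rfl
    rw [smul_smul, ← add_smul, mul_neg, neg_add_cancel, zero_smul]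
  intro t ht
  rw [Real.exp_sub, div_eq_inv_mul, ← smul_smul, ← eq_of_hasDerivWithinAt_Ici_zero hz t ht,
    smul_smul, inv_mul_cancel₀ (Real.exp_ne_zero _), one_smul]

end

theorem characteristic_parametric_determining_form_general
    {X : Type*} [NormedAddCommGroup X] [NormedSpace ℝ X]
    (g : X → ℝ) (hg_cont : Continuous g) (hg_nonneg : ∀ x, 0 ≤ g x)
    (p v₀ : X) (v : ℝ → X) (hv0 : v 0 = v₀)
    (hv' : ∀ τ ∈ Set.Ici (0:ℝ),
      HasDerivWithinAt v ((-(g (v τ))) • (v τ - p)) (Set.Ici 0) τ)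
    (θ : ℝ → ℝ)
    (hθ : ∀ τ, θ τ = Real.exp (-(∫ σ in (0:ℝ)..τ, g (v σ)))) :
    θ 0 = 1 ∧
    (∀ τ ∈ Set.Ici (0:ℝ), θ τ ∈ Set.Ioc (0:ℝ) 1) ∧
    (∀ τ ∈ Set.Ici (0:ℝ),
      HasDerivWithinAt θ (-(θ τ * g (θ τ • v₀ + (1 - θ τ) • p))) (Set.Ici 0) τ) := by
  have hgv : ContinuousOn (fun σ => g (v σ)) (Ici 0) :=
    hg_cont.comp_continuousOn fun τ hτ => (hv' τ hτ).continuousWithinAt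
  have hI : ∀ τ ∈ Ici (0:ℝ),
      HasDerivWithinAt (fun t => ∫ σ in (0:ℝ)..t, g (v σ)) (g (v τ)) (Ici 0) τ :=
    fun τ hτ => hasDerivWithinAt_integral_Ici hgv hτ
  have hv_eq : ∀ τ ∈ Ici (0:ℝ), v τ = θ τ • v₀ + (1 - θ τ) • p := by
    intro τ hτ
    have h := sub_eq_exp_smul_of_hasDerivWithinAt hI hv' τ hτ
    rw [integral_same, zero_sub, ← hθ, hv0, sub_eq_iff_eq_add] at h
    rw [h]
    module
  refine ⟨by simp [hθ], fun τ hτ => ?_, fun τ hτ => ?_⟩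
  · rw [hθ]
    exact ⟨Real.exp_pos _, Real.exp_le_one_iff.2
      (neg_nonpos.2 (integral_nonneg hτ fun σ _ => hg_nonneg _))⟩
  · rw [← hv_eq τ hτ, funext hθ, neg_mul_eq_mul_neg]
    exact (hI τ hτ).neg.exp

/-- For a solution of the abstract determining form `dv/dτ = -g(v)(v - p)`, the
characteristic determining parameter `θ(τ) = exp(-∫₀^τ g(v(σ)) dσ)` is differentiable
on `[0,∞)`, satisfies `θ(0) = 1`, `θ(τ) ∈ (0,1]`, and solves the one-dimensional
characteristic parametric determining form `dθ/dτ = -θ·g(θ·v₀ + (1-θ)·p)`. -/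
theorem characteristic_parametric_determining_form
    {X : Type*} [NormedAddCommGroup X] [NormedSpace ℝ X] [CompleteSpace X]
    (g : X → ℝ) (hg_cont : Continuous g) (hg_nonneg : ∀ x, 0 ≤ g x)
    (p v₀ : X) (v : ℝ → X) (hv0 : v 0 = v₀)
    (hv' : ∀ τ ∈ Set.Ici (0:ℝ),
      HasDerivWithinAt v ((-(g (v τ))) • (v τ - p)) (Set.Ici 0) τ)
    (θ : ℝ → ℝ)
    (hθ : ∀ τ, θ τ = Real.exp (-(∫ σ in (0:ℝ)..τ, g (v σ)))) :
    θ 0 = 1 ∧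
    (∀ τ ∈ Set.Ici (0:ℝ), θ τ ∈ Set.Ioc (0:ℝ) 1) ∧
    (∀ τ ∈ Set.Ici (0:ℝ),
      HasDerivWithinAt θ (-(θ τ * g (θ τ • v₀ + (1 - θ τ) • p))) (Set.Ici 0) τ) :=
  characteristic_parametric_determining_form_general g hg_cont hg_nonneg p v₀ v hv0 hv' θ hθ
end

section
/- Let v : [0,∞) → X be continuously differentiable with v(0) = v₀ and v′(τ) = −g(v(τ))·(v(τ) − p) for all τ ≥ 0, and set θ(τ) = exp(−∫₀^τ g(v(σ)) dσ) with limit θ̄ = lim_{τ→∞} θ(τ). Then θ̄ = 0 if and only if ∫₀^∞ g(v(σ)) dσ = ∞, and in that case v(τ) → p in X as τ → ∞. -/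
open Set Filter Topology MeasureTheory intervalIntegral

/-!
Multiplying by the integrating factor `exp (∫₀^τ g(v))` shows that `v(τ) - p = θ(τ) • (v(0) - p)`
for `τ ≥ 0`: the solution moves along the segment from `v(0)` to `p`, and reaches `p` in the limit
once `θ = exp (-∫₀^τ g(v))` tends to `0`, i.e. once the integral diverges.
-/

theorem hasDerivWithinAt_integral_Ici_of_continuousOn {a : ℝ → ℝ} {t₀ x : ℝ}
    (ha : ContinuousOn a (Ici t₀)) (hx : t₀ ≤ x) :
    HasDerivWithinAt (fun u => ∫ σ in t₀..u, a σ) (a x) (Ici x) x := by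
  have hint : IntervalIntegrable a volume t₀ x :=
    (ha.mono (uIcc_of_le hx ▸ Icc_subset_Ici_self)).intervalIntegrable
  exact integral_hasDerivWithinAt_right hint
    ⟨Ici t₀, mem_of_superset self_mem_nhdsWithin (Ioi_subset_Ici hx),
      ha.aestronglyMeasurable measurableSet_Ici⟩
    ((ha x hx).mono (Ioi_subset_Ici hx))

theorem eq_exp_neg_integral_smul_of_hasDerivWithinAt {E : Type*} [NormedAddCommGroup E]
    [NormedSpace ℝ E] {a : ℝ → ℝ} {f : ℝ → E} {t₀ τ : ℝ} (ha : ContinuousOn a (Ici t₀))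
    (hf : ∀ t ∈ Ici t₀, HasDerivWithinAt f (-a t • f t) (Ici t₀) t) (hτ : t₀ ≤ τ) :
    f τ = Real.exp (-∫ σ in t₀..τ, a σ) • f t₀ := by
  have hI_cont : ContinuousOn (fun u => ∫ σ in t₀..u, a σ) (Icc t₀ τ) := by
    have := continuousOn_primitive_interval (μ := volume)
      ((ha.mono (uIcc_of_le hτ ▸ Icc_subset_Ici_self)).integrableOn_compact isCompact_uIcc)
    rwa [uIcc_of_le hτ] at this
  have hf_cont : ContinuousOn f (Icc t₀ τ) := fun t ht =>
    (hf t ht.1).continuousWithinAt.mono Icc_subset_Ici_self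
  have hderiv : ∀ t ∈ Ico t₀ τ,
      HasDerivWithinAt (fun u => Real.exp (∫ σ in t₀..u, a σ) • f u) 0 (Ici t) t :=
    fun t ht => (((hasDerivWithinAt_integral_Ici_of_continuousOn ha ht.1).exp).smul
      ((hf t ht.1).mono (Ici_subset_Ici.2 ht.1))).congr_deriv (by module)
  have hconst : Real.exp (∫ σ in t₀..τ, a σ) • f τ = f t₀ := by
    simpa using constant_of_has_deriv_right_zero
      ((Real.continuous_exp.comp_continuousOn hI_cont).smul hf_cont) hderiv τ ⟨hτ, le_rfl⟩
  rw [← hconst, smul_smul, ← Real.exp_add, neg_add_cancel, Real.exp_zero, one_smul]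

theorem theta_bar_zero_iff_general
    {X : Type*} [NormedAddCommGroup X] [NormedSpace ℝ X]
    (g : X → ℝ) (hg_cont : Continuous g)
    (p : X) (v : ℝ → X)
    (hv' : ∀ τ ∈ Set.Ici (0:ℝ),
      HasDerivWithinAt v ((-(g (v τ))) • (v τ - p)) (Set.Ici 0) τ)
    (θ : ℝ → ℝ)
    (hθ : ∀ τ, θ τ = Real.exp (-(∫ σ in (0:ℝ)..τ, g (v σ))))
    (θbar : ℝ) (hlim : Filter.Tendsto θ Filter.atTop (nhds θbar)) :
    (θbar = 0 ↔
      Filter.Tendsto (fun τ => ∫ σ in (0:ℝ)..τ, g (v σ)) Filter.atTop Filter.atTop) ∧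
    (θbar = 0 → Filter.Tendsto v Filter.atTop (nhds p)) := by
  have hθbar : θbar = 0 ↔ Tendsto θ atTop (𝓝 0) :=
    ⟨fun h => h ▸ hlim, tendsto_nhds_unique hlim⟩
  refine ⟨by rw [hθbar, funext hθ, Real.tendsto_exp_comp_nhds_zero, tendsto_neg_atBot_iff],
    fun h0 => ?_⟩
  have hgv : ContinuousOn (fun σ => g (v σ)) (Ici 0) :=
    hg_cont.comp_continuousOn fun τ hτ => (hv' τ hτ).continuousWithinAt
  have hsegment : ∀ τ ≥ 0, v τ - p = θ τ • (v 0 - p) := fun τ hτ => by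
    rw [hθ]
    exact eq_exp_neg_integral_smul_of_hasDerivWithinAt hgv (fun t ht => (hv' t ht).sub_const p) hτ
  have hlim_v : Tendsto (fun τ => θ τ • (v 0 - p) + p) atTop (𝓝 p) := by
    simpa [h0] using (hlim.smul_const (v 0 - p)).add_const p
  refine hlim_v.congr' ?_
  filter_upwards [eventually_ge_atTop 0] with τ hτ
  rw [← hsegment τ hτ, sub_add_cancel]

/-- For a solution of the abstract determining form `dv/dτ = -g(v)(v - p)` with
characteristic determining parameter `θ(τ) = exp(-∫₀^τ g(v(σ)) dσ)` having limit `θ̄`: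
`θ̄ = 0` if and only if `∫₀^∞ g(v(σ)) dσ = ∞`, and in that case `v(τ) → p` as `τ → ∞`. -/
theorem theta_bar_zero_iff
    {X : Type*} [NormedAddCommGroup X] [NormedSpace ℝ X] [CompleteSpace X]
    (g : X → ℝ) (hg_cont : Continuous g) (hg_nonneg : ∀ x, 0 ≤ g x)
    (p v₀ : X) (v : ℝ → X) (hv0 : v 0 = v₀)
    (hv' : ∀ τ ∈ Set.Ici (0:ℝ),
      HasDerivWithinAt v ((-(g (v τ))) • (v τ - p)) (Set.Ici 0) τ)
    (θ : ℝ → ℝ)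
    (hθ : ∀ τ, θ τ = Real.exp (-(∫ σ in (0:ℝ)..τ, g (v σ))))
    (θbar : ℝ) (hlim : Filter.Tendsto θ Filter.atTop (nhds θbar)) :
    (θbar = 0 ↔
      Filter.Tendsto (fun τ => ∫ σ in (0:ℝ)..τ, g (v σ)) Filter.atTop Filter.atTop) ∧
    (θbar = 0 → Filter.Tendsto v Filter.atTop (nhds p)) :=
  theta_bar_zero_iff_general g hg_cont p v hv' θ hθ θbar hlim
end
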